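/- arXiv:1704.00785 — 2 statements merged into one kernel-verified Lean document; each statement's English description precedes it below -/
import Mathlib

section
/- Let a and G be n_A×n_A complex matrices, and let b and ρ_s be n_B×n_B complex matrices. Set α = tr(aG), β = tr(a†G), and define on the tensor space K₁ = G† ⊗ (ρ_s b† − b† ρ_s) + G ⊗ (b ρ_s − ρ_s b). Suppose x₁, x₂, y₁, y₂ ∈ ℂ satisfy |x₁|² + |x₂|² = 2Re(α) + 1, |y₁|² + |y₂|² = 2Re(α), and x₁ y₁* + x₂ y₂* = −2β. Then tr_A( (a⊗I)·[ K₁, I⊗b† ] + [ I⊗b, K₁ ]·(a†⊗I) ) + D_b(ρ_s) = D_{x₁ b + y₁ b†}(ρ_s) + D_{x₂ b + y₂ b†}(ρ_s) + ((α* − α)/2) [ b†b − bb†, ρ_s ]. -/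
open scoped Matrix Kronecker

/-- The dissipator `D_X(ρ) = XρX† − (1/2)(X†Xρ + ρX†X)`. -/
noncomputable def dissipator {n : ℕ} (X ρ : Matrix (Fin n) (Fin n) ℂ) :
    Matrix (Fin n) (Fin n) ℂ :=
  X * ρ * Xᴴ - (1 / 2 : ℂ) • (Xᴴ * X * ρ + ρ * (Xᴴ * X))

/-- Partial trace over the first tensor factor:
`(tr_A M)_{j,j'} = Σ_i M_{(i,j),(i,j')}`. -/
noncomputable def ptraceA {nA nB : ℕ}
    (M : Matrix (Fin nA × Fin nB) (Fin nA × Fin nB) ℂ) :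
    Matrix (Fin nB) (Fin nB) ℂ :=
  fun j j' => ∑ i, M (i, j) (i, j')


open scoped Matrix Kronecker

lemma ptraceA_add {nA nB : ℕ} (M N : Matrix (Fin nA × Fin nB) (Fin nA × Fin nB) ℂ) :
    ptraceA (M + N) = ptraceA M + ptraceA N := by
  ext j j'; simp [ptraceA, Finset.sum_add_distrib]

lemma ptraceA_sub {nA nB : ℕ} (M N : Matrix (Fin nA × Fin nB) (Fin nA × Fin nB) ℂ) :
    ptraceA (M - N) = ptraceA M - ptraceA N := by
  ext j j'; simp [ptraceA, Finset.sum_sub_distrib]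

lemma ptraceA_kron {nA nB : ℕ} (P : Matrix (Fin nA) (Fin nA) ℂ)
    (Q : Matrix (Fin nB) (Fin nB) ℂ) :
    ptraceA (P ⊗ₖ Q) = P.trace • Q := by
  ext j j'
  simp [ptraceA, Matrix.trace, Matrix.kroneckerMap_apply, Finset.sum_mul, Matrix.diag]
/-- with `α = tr(aG)`, `β = tr(a†G)`,
`K₁ = G† ⊗ (ρ_s b† − b† ρ_s) + G ⊗ (b ρ_s − ρ_s b)`, and `x₁,x₂,y₁,y₂` satisfying
`|x₁|²+|x₂|² = 2Re α + 1`, `|y₁|²+|y₂|² = 2Re α`, `x₁y₁* + x₂y₂* = −2β`, one has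
`tr_A((a⊗I)[K₁, I⊗b†] + [I⊗b, K₁](a†⊗I)) + D_b(ρ_s)
  = D_{x₁b+y₁b†}(ρ_s) + D_{x₂b+y₂b†}(ρ_s) + ((α*−α)/2)[b†b − bb†, ρ_s]`. -/
theorem stmt15 {nA nB : ℕ}
    (a G : Matrix (Fin nA) (Fin nA) ℂ)
    (b ρs : Matrix (Fin nB) (Fin nB) ℂ)
    (x₁ x₂ y₁ y₂ : ℂ)
    (hx : Complex.normSq x₁ + Complex.normSq x₂ = 2 * (a * G).trace.re + 1)
    (hy : Complex.normSq y₁ + Complex.normSq y₂ = 2 * (a * G).trace.re)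
    (hxy : x₁ * (starRingEnd ℂ) y₁ + x₂ * (starRingEnd ℂ) y₂ = -2 * (aᴴ * G).trace) :
    ptraceA ((a ⊗ₖ (1 : Matrix (Fin nB) (Fin nB) ℂ))
          * ((Gᴴ ⊗ₖ (ρs * bᴴ - bᴴ * ρs) + G ⊗ₖ (b * ρs - ρs * b))
              * ((1 : Matrix (Fin nA) (Fin nA) ℂ) ⊗ₖ bᴴ)
            - ((1 : Matrix (Fin nA) (Fin nA) ℂ) ⊗ₖ bᴴ)
              * (Gᴴ ⊗ₖ (ρs * bᴴ - bᴴ * ρs) + G ⊗ₖ (b * ρs - ρs * b)))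
        + (((1 : Matrix (Fin nA) (Fin nA) ℂ) ⊗ₖ b)
              * (Gᴴ ⊗ₖ (ρs * bᴴ - bᴴ * ρs) + G ⊗ₖ (b * ρs - ρs * b))
            - (Gᴴ ⊗ₖ (ρs * bᴴ - bᴴ * ρs) + G ⊗ₖ (b * ρs - ρs * b))
              * ((1 : Matrix (Fin nA) (Fin nA) ℂ) ⊗ₖ b))
          * (aᴴ ⊗ₖ (1 : Matrix (Fin nB) (Fin nB) ℂ)))
      + dissipator b ρs
      = dissipator (x₁ • b + y₁ • bᴴ) ρs + dissipator (x₂ • b + y₂ • bᴴ) ρs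
        + (((starRingEnd ℂ) ((a * G).trace) - (a * G).trace) / 2)
            • ((bᴴ * b - b * bᴴ) * ρs - ρs * (bᴴ * b - b * bᴴ)) := by
  set α := (a * G).trace with hα
  set β := (aᴴ * G).trace with hβ
  have hxC : x₁ * (starRingEnd ℂ) x₁ + x₂ * (starRingEnd ℂ) x₂
      = α + (starRingEnd ℂ) α + 1 := by
    rw [Complex.mul_conj, Complex.mul_conj, Complex.add_conj]
    exact_mod_cast hx
  have hyC : y₁ * (starRingEnd ℂ) y₁ + y₂ * (starRingEnd ℂ) y₂
      = α + (starRingEnd ℂ) α := by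
    rw [Complex.mul_conj, Complex.mul_conj, Complex.add_conj]
    exact_mod_cast hy
  have hxyC' : (starRingEnd ℂ) x₁ * y₁ + (starRingEnd ℂ) x₂ * y₂
      = -2 * (starRingEnd ℂ) β := by
    have h2 := congrArg (starRingEnd ℂ) hxy
    simp only [map_add, map_mul, map_neg, map_ofNat, Complex.conj_conj] at h2
    linear_combination h2
  have hT1 : (a * Gᴴ).trace = (starRingEnd ℂ) β := by
    have h : a * Gᴴ = (G * aᴴ)ᴴ := by simp [Matrix.conjTranspose_mul]
    rw [h, Matrix.trace_conjTranspose, Matrix.trace_mul_comm, hβ, starRingEnd_apply]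
  have hT2 : (Gᴴ * aᴴ).trace = (starRingEnd ℂ) α := by
    have h : Gᴴ * aᴴ = (a * G)ᴴ := by simp [Matrix.conjTranspose_mul]
    rw [h, Matrix.trace_conjTranspose, hα, starRingEnd_apply]
  have hT3 : (G * aᴴ).trace = β := by rw [Matrix.trace_mul_comm, hβ]
  have hT0 : (a * G).trace = α := hα.symm
  set C1 := ρs * bᴴ - bᴴ * ρs with hC1
  set C2 := b * ρs - ρs * b with hC2
  have e1 : ((a ⊗ₖ (1 : Matrix (Fin nB) (Fin nB) ℂ))
          * ((Gᴴ ⊗ₖ C1 + G ⊗ₖ C2)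
              * ((1 : Matrix (Fin nA) (Fin nA) ℂ) ⊗ₖ bᴴ)
            - ((1 : Matrix (Fin nA) (Fin nA) ℂ) ⊗ₖ bᴴ)
              * (Gᴴ ⊗ₖ C1 + G ⊗ₖ C2))
        + (((1 : Matrix (Fin nA) (Fin nA) ℂ) ⊗ₖ b)
              * (Gᴴ ⊗ₖ C1 + G ⊗ₖ C2)
            - (Gᴴ ⊗ₖ C1 + G ⊗ₖ C2)
              * ((1 : Matrix (Fin nA) (Fin nA) ℂ) ⊗ₖ b))
          * (aᴴ ⊗ₖ (1 : Matrix (Fin nB) (Fin nB) ℂ)))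
      = ((a * Gᴴ) ⊗ₖ (C1 * bᴴ) - (a * Gᴴ) ⊗ₖ (bᴴ * C1))
        + ((a * G) ⊗ₖ (C2 * bᴴ) - (a * G) ⊗ₖ (bᴴ * C2))
        + ((Gᴴ * aᴴ) ⊗ₖ (b * C1) - (Gᴴ * aᴴ) ⊗ₖ (C1 * b))
        + ((G * aᴴ) ⊗ₖ (b * C2) - (G * aᴴ) ⊗ₖ (C2 * b)) := by
    simp only [mul_add, add_mul, mul_sub, sub_mul, ← Matrix.mul_kronecker_mul,
      Matrix.one_mul, Matrix.mul_one, one_mul, mul_one]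
    abel
  rw [e1, ptraceA_add, ptraceA_add, ptraceA_add, ptraceA_sub, ptraceA_sub, ptraceA_sub,
    ptraceA_sub, ptraceA_kron, ptraceA_kron, ptraceA_kron, ptraceA_kron, ptraceA_kron,
    ptraceA_kron, ptraceA_kron, ptraceA_kron, hT1, hT2, hT3, hT0]
  clear_value α β
  simp only [dissipator, hC1, hC2, Matrix.conjTranspose_add, Matrix.conjTranspose_smul,
    Matrix.conjTranspose_conjTranspose, mul_add, add_mul, mul_sub, sub_mul,
    smul_mul_assoc, mul_smul_comm, smul_smul, smul_add, smul_sub, mul_assoc,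
    ← starRingEnd_apply]
  match_scalars
  · linear_combination hxyC' / 2
  · linear_combination -hxyC'
  · linear_combination hxyC' / 2
  · linear_combination -hxC
  · linear_combination hyC / 2
  · linear_combination hxC / 2
  · linear_combination -hyC
  · linear_combination hyC / 2
  · linear_combination hxC / 2
  · linear_combination hxy / 2
  · linear_combination -hxy
  · linear_combination hxy / 2
end

section
/- Let a be an n×n complex matrix and let L(ρ) = −i[H,ρ] + Σ_μ D_{L_μ}(ρ) + D_a(ρ) be a Lindblad generator (including the dissipator D_a) whose restriction to the subspace of traceless matrices is injective, and let ρ̄ be a density matrix with L(ρ̄) = 0. Let X be the unique traceless matrix with −L(X) = ρ̄a† − tr(ρ̄a†)ρ̄. Then Re( tr(aX) ) ≥ 0. -/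
open scoped Matrix ComplexOrder

/-!
Let `L*` be the adjoint of `L` for the trace pairing `(M, N) ↦ tr (M N)`. As `L` is injective on
traceless matrices, `ker L` is spanned by `ρ̄`, and `tr (a ρ̄) • 1 - a` is trace-orthogonal to `ρ̄`,
so it equals `L*(A)` for some `A`. Since `tr X = 0`, this gives
`tr (a X) = -tr (L*(A) X) = -tr (A L(X)) = -tr (ρ̄ L*(A†) A)`.
Finally `L*(A†A) = A† L*(A) + L*(A†) A + Σᵢ [Jᵢ, A]† [Jᵢ, A]`; pairing with the stationary
state `ρ̄` gives `0 = 2 Re tr (ρ̄ L*(A†) A) + Σᵢ tr (ρ̄ [Jᵢ, A]† [Jᵢ, A])` with nonnegative summands.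
-/

open Matrix Finset

section TraceDuality

variable {K ι : Type*} [Field K] [Fintype ι] [DecidableEq ι]

noncomputable def traceDual : Matrix ι ι K →ₗ[K] Module.Dual K (Matrix ι ι K) :=
  (LinearMap.mul K (Matrix ι ι K)).compr₂ (traceLinearMap ι K K)

theorem traceDual_apply (M N : Matrix ι ι K) : traceDual M N = (M * N).trace := rfl

theorem traceDual_injective : Function.Injective (traceDual : Matrix ι ι K → _) :=
  fun _ _ h => ext_iff_trace_mul_right.2 fun N => LinearMap.congr_fun h N

theorem traceDual_surjective : Function.Surjective (traceDual : Matrix ι ι K → _) :=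
  (LinearMap.injective_iff_surjective_of_finrank_eq_finrank Subspace.dual_finrank_eq.symm).1
    traceDual_injective

theorem exists_adjoint_eq_of_trace_mul_ker_eq_zero (f : Matrix ι ι K →ₗ[K] Matrix ι ι K)
    {g : Matrix ι ι K → Matrix ι ι K} (hfg : ∀ M N, (M * f N).trace = (g M * N).trace)
    {W : Matrix ι ι K} (hW : ∀ Z ∈ LinearMap.ker f, (W * Z).trace = 0) : ∃ A, g A = W := by
  have hmem : traceDual W ∈ (LinearMap.ker f).dualAnnihilator :=
    (Submodule.mem_dualAnnihilator _).2 hW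
  rw [← LinearMap.range_dualMap_eq_dualAnnihilator_ker] at hmem
  obtain ⟨φ, hφ⟩ := hmem
  obtain ⟨A, rfl⟩ := traceDual_surjective φ
  refine ⟨A, traceDual_injective ?_⟩
  ext N
  rw [← hφ, traceDual_apply, LinearMap.dualMap_apply, traceDual_apply, hfg]

end TraceDuality

theorem eq_trace_smul_of_injOn_traceless {K ι : Type*} [CommRing K] [Fintype ι]
    {f : Matrix ι ι K →ₗ[K] Matrix ι ι K} (hf : Set.InjOn f {X | X.trace = 0})
    {ρ : Matrix ι ι K} (hρ : f ρ = 0) (htr : ρ.trace = 1) {Z : Matrix ι ι K} (hZ : f Z = 0) :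
    Z = Z.trace • ρ :=
  sub_eq_zero.1 <| hf (by simp [trace_smul, htr]) (trace_zero _ _) (by simp [hZ, hρ])

section Lindblad

variable {n : ℕ}

noncomputable def dissipatorAdjoint (X A : Matrix (Fin n) (Fin n) ℂ) :
    Matrix (Fin n) (Fin n) ℂ :=
  Xᴴ * A * X - (1 / 2 : ℂ) • (Xᴴ * X * A + A * (Xᴴ * X))

theorem trace_mul_dissipator (X M N : Matrix (Fin n) (Fin n) ℂ) :
    (M * dissipator X N).trace = (dissipatorAdjoint X M * N).trace := by
  simp only [dissipator, dissipatorAdjoint, mul_sub, sub_mul, mul_add, add_mul, mul_smul_comm,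
    smul_mul_assoc, trace_sub, trace_add, trace_smul, ← mul_assoc]
  rw [trace_mul_comm (M * X * N), mul_assoc (M * N), trace_mul_comm (M * N), add_comm]
  simp only [← mul_assoc]

theorem conjTranspose_dissipatorAdjoint (X A : Matrix (Fin n) (Fin n) ℂ) :
    (dissipatorAdjoint X A)ᴴ = dissipatorAdjoint X Aᴴ := by
  simp only [dissipatorAdjoint, conjTranspose_sub, conjTranspose_mul, conjTranspose_smul,
    conjTranspose_add, conjTranspose_conjTranspose, mul_assoc, star_div₀, star_one, star_ofNat]
  rw [add_comm (Aᴴ * _)]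

theorem dissipatorAdjoint_conjTranspose_mul_self (X A : Matrix (Fin n) (Fin n) ℂ) :
    dissipatorAdjoint X (Aᴴ * A) = Aᴴ * dissipatorAdjoint X A + dissipatorAdjoint X Aᴴ * A
      + (X * A - A * X)ᴴ * (X * A - A * X) := by
  simp only [dissipatorAdjoint, conjTranspose_mul, conjTranspose_sub, mul_add, add_mul,
    mul_sub, sub_mul, mul_smul_comm, smul_mul_assoc, smul_add, mul_assoc]
  module

noncomputable def dissipatorₗ (X : Matrix (Fin n) (Fin n) ℂ) :
    Matrix (Fin n) (Fin n) ℂ →ₗ[ℂ] Matrix (Fin n) (Fin n) ℂ where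
  toFun := dissipator X
  map_add' ρ σ := by simp only [dissipator, mul_add, add_mul, smul_add]; abel
  map_smul' c ρ := by
    simp only [dissipator, mul_smul_comm, smul_mul_assoc, smul_add, smul_sub, RingHom.id_apply,
      smul_comm c]

variable {ι : Type*} [Fintype ι]

noncomputable def lindbladian (H : Matrix (Fin n) (Fin n) ℂ) (J : ι → Matrix (Fin n) (Fin n) ℂ) :
    Matrix (Fin n) (Fin n) ℂ →ₗ[ℂ] Matrix (Fin n) (Fin n) ℂ :=
  (-Complex.I) • (LinearMap.mulLeft ℂ H - LinearMap.mulRight ℂ H) + ∑ i, dissipatorₗ (J i)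

theorem lindbladian_apply (H : Matrix (Fin n) (Fin n) ℂ) (J : ι → Matrix (Fin n) (Fin n) ℂ)
    (ρ : Matrix (Fin n) (Fin n) ℂ) :
    lindbladian H J ρ = (-Complex.I) • (H * ρ - ρ * H) + ∑ i, dissipator (J i) ρ := by
  simp [lindbladian, dissipatorₗ]

noncomputable def lindbladianAdjoint (H : Matrix (Fin n) (Fin n) ℂ)
    (J : ι → Matrix (Fin n) (Fin n) ℂ) (A : Matrix (Fin n) (Fin n) ℂ) :
    Matrix (Fin n) (Fin n) ℂ :=
  Complex.I • (H * A - A * H) + ∑ i, dissipatorAdjoint (J i) A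

theorem trace_mul_lindbladian (H : Matrix (Fin n) (Fin n) ℂ) (J : ι → Matrix (Fin n) (Fin n) ℂ)
    (M N : Matrix (Fin n) (Fin n) ℂ) :
    (M * lindbladian H J N).trace = (lindbladianAdjoint H J M * N).trace := by
  have hcomm : (M * (H * N - N * H)).trace = -((H * M - M * H) * N).trace := by
    simp only [mul_sub, sub_mul, trace_sub, ← mul_assoc]
    rw [trace_mul_cycle M N H]
    ring
  simp only [lindbladian_apply, lindbladianAdjoint, mul_add, add_mul, mul_smul_comm,
    smul_mul_assoc, trace_add, trace_smul, mul_sum, sum_mul, trace_sum, trace_mul_dissipator,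
    hcomm, smul_eq_mul]
  ring

theorem conjTranspose_lindbladianAdjoint {H : Matrix (Fin n) (Fin n) ℂ} (hH : H.IsHermitian)
    (J : ι → Matrix (Fin n) (Fin n) ℂ) (A : Matrix (Fin n) (Fin n) ℂ) :
    (lindbladianAdjoint H J A)ᴴ = lindbladianAdjoint H J Aᴴ := by
  simp only [lindbladianAdjoint, conjTranspose_add, conjTranspose_smul, conjTranspose_sub,
    conjTranspose_mul, conjTranspose_sum, conjTranspose_dissipatorAdjoint, hH.eq,
    Complex.star_def, Complex.conj_I]
  congr 1
  module

theorem lindbladianAdjoint_conjTranspose_mul_self (H : Matrix (Fin n) (Fin n) ℂ)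
    (J : ι → Matrix (Fin n) (Fin n) ℂ) (A : Matrix (Fin n) (Fin n) ℂ) :
    lindbladianAdjoint H J (Aᴴ * A) = Aᴴ * lindbladianAdjoint H J A
      + lindbladianAdjoint H J Aᴴ * A + ∑ i, (J i * A - A * J i)ᴴ * (J i * A - A * J i) := by
  have hcomm : Complex.I • (H * (Aᴴ * A) - Aᴴ * A * H)
      = Aᴴ * (Complex.I • (H * A - A * H)) + Complex.I • (H * Aᴴ - Aᴴ * H) * A := by
    simp only [mul_sub, sub_mul, mul_smul_comm, smul_mul_assoc, mul_assoc]
    module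
  simp only [lindbladianAdjoint, dissipatorAdjoint_conjTranspose_mul_self, hcomm,
    sum_add_distrib, mul_sum, sum_mul, mul_add, add_mul]
  abel

theorem re_trace_mul_lindbladianAdjoint_mul_nonpos {H : Matrix (Fin n) (Fin n) ℂ}
    (hH : H.IsHermitian) (J : ι → Matrix (Fin n) (Fin n) ℂ) {ρ : Matrix (Fin n) (Fin n) ℂ}
    (hρ : ρ.PosSemidef) (hstat : lindbladian H J ρ = 0) (A : Matrix (Fin n) (Fin n) ℂ) :
    (ρ * (lindbladianAdjoint H J Aᴴ * A)).trace.re ≤ 0 := by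
  have hS : (ρ * (Aᴴ * lindbladianAdjoint H J A)).trace
      = star (ρ * (lindbladianAdjoint H J Aᴴ * A)).trace := by
    rw [← trace_conjTranspose, conjTranspose_mul, conjTranspose_mul, hρ.isHermitian.eq,
      conjTranspose_lindbladianAdjoint hH, conjTranspose_conjTranspose, trace_mul_comm]
  have hpos : ∀ C : Matrix (Fin n) (Fin n) ℂ, 0 ≤ (ρ * (Cᴴ * C)).trace.re := fun C => by
    rw [trace_mul_cycle', ← mul_assoc]
    exact (Complex.nonneg_iff.1 (hρ.mul_mul_conjTranspose_same C).trace_nonneg).1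
  have hzero : (ρ * lindbladianAdjoint H J (Aᴴ * A)).trace = 0 := by
    rw [trace_mul_comm, ← trace_mul_lindbladian, hstat, mul_zero, trace_zero]
  rw [lindbladianAdjoint_conjTranspose_mul_self, mul_add, mul_add, trace_add, trace_add, hS,
    mul_sum, trace_sum] at hzero
  have := congrArg Complex.re hzero
  simp only [Complex.add_re, Complex.re_sum, Complex.star_def, Complex.conj_re,
    Complex.zero_re] at this
  linarith [sum_nonneg fun i (_ : i ∈ univ) => hpos (J i * A - A * J i)]

end Lindblad

theorem re_trace_mul_nonneg_of_neg_lindbladian_eq {n : ℕ} {ι : Type*} [Fintype ι]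
    {H : Matrix (Fin n) (Fin n) ℂ} (hH : H.IsHermitian) (J : ι → Matrix (Fin n) (Fin n) ℂ)
    (hinj : Set.InjOn (lindbladian H J) {X | X.trace = 0}) {ρ : Matrix (Fin n) (Fin n) ℂ}
    (hρ : ρ.PosSemidef) (htr : ρ.trace = 1) (hstat : lindbladian H J ρ = 0)
    (a : Matrix (Fin n) (Fin n) ℂ) {X : Matrix (Fin n) (Fin n) ℂ} (hXtr : X.trace = 0)
    (hX : -lindbladian H J X = ρ * aᴴ - (ρ * aᴴ).trace • ρ) :
    0 ≤ (a * X).trace.re := by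
  have hconj : (ρ * aᴴ).trace = star (a * ρ).trace := by
    rw [← trace_conjTranspose, conjTranspose_mul, hρ.isHermitian.eq]
  obtain ⟨A, hA⟩ : ∃ A, lindbladianAdjoint H J A = (a * ρ).trace • 1 - a := by
    refine exists_adjoint_eq_of_trace_mul_ker_eq_zero _ (trace_mul_lindbladian H J) fun Z hZ => ?_
    rw [eq_trace_smul_of_injOn_traceless hinj hstat htr hZ]
    simp [sub_mul, trace_smul, htr]
  have hA' : lindbladianAdjoint H J Aᴴ = star (a * ρ).trace • 1 - aᴴ := by
    rw [← conjTranspose_lindbladianAdjoint hH, hA, conjTranspose_sub, conjTranspose_smul,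
      conjTranspose_one]
  have key : (a * X).trace = -(ρ * (lindbladianAdjoint H J Aᴴ * A)).trace :=
    calc (a * X).trace = -(lindbladianAdjoint H J A * X).trace := by
          simp [hA, sub_mul, trace_smul, hXtr]
      _ = (A * -lindbladian H J X).trace := by rw [mul_neg, trace_neg, trace_mul_lindbladian]
      _ = (ρ * (aᴴ - star (a * ρ).trace • 1) * A).trace := by
          rw [hX, hconj, mul_sub ρ, mul_smul_comm, mul_one, trace_mul_comm]
      _ = -(ρ * (lindbladianAdjoint H J Aᴴ * A)).trace := by
          rw [hA', ← neg_sub, mul_neg, neg_mul, trace_neg, mul_assoc]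
  rw [key, Complex.neg_re, neg_nonneg]
  exact re_trace_mul_lindbladianAdjoint_mul_nonpos hH J hρ hstat A

/-- let `L(ρ) = −i[H,ρ] + Σ_μ D_{L_μ}(ρ) + D_a(ρ)` be a Lindblad generator
whose restriction to traceless matrices is injective, `ρ̄` a density matrix with
`L(ρ̄) = 0`, and `X` the unique traceless matrix with `−L(X) = ρ̄a† − tr(ρ̄a†)ρ̄`.
Then `Re(tr(aX)) ≥ 0`. -/
theorem stmt17 {n m : ℕ} (a : Matrix (Fin n) (Fin n) ℂ)
    (L : Matrix (Fin n) (Fin n) ℂ → Matrix (Fin n) (Fin n) ℂ)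
    (H : Matrix (Fin n) (Fin n) ℂ) (hH : H.IsHermitian)
    (Lop : Fin m → Matrix (Fin n) (Fin n) ℂ)
    (hL : ∀ ρ, L ρ = (-Complex.I) • (H * ρ - ρ * H) + ∑ μ, dissipator (Lop μ) ρ
      + dissipator a ρ)
    (hinj : ∀ X Y : Matrix (Fin n) (Fin n) ℂ,
      X.trace = 0 → Y.trace = 0 → L X = L Y → X = Y)
    (ρbar : Matrix (Fin n) (Fin n) ℂ) (hpsd : ρbar.PosSemidef) (htr : ρbar.trace = 1)
    (hstat : L ρbar = 0)
    (X : Matrix (Fin n) (Fin n) ℂ) (hXtr : X.trace = 0)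
    (hX : -(L X) = ρbar * aᴴ - (ρbar * aᴴ).trace • ρbar) :
    0 ≤ ((a * X).trace).re := by
  obtain rfl : L = lindbladian H (Fin.cons a Lop : Fin (m + 1) → _) := funext fun ρ => by
    rw [hL, lindbladian_apply, Fin.sum_univ_succ, Fin.cons_zero]
    simp only [Fin.cons_succ]
    abel
  exact re_trace_mul_nonneg_of_neg_lindbladian_eq hH _ (fun X hX Y hY => hinj X Y hX hY) hpsd htr
    hstat a hXtr hX
end
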